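/- arXiv:0907.3268 — 4 statements merged into one kernel-verified Lean document; each statement's English description precedes it below -/
import Mathlib

section
/- Let (A, σ) be a state BL-algebra and F a proper state-filter of (A, σ). Then F is a maximal state-filter (i.e., F is not properly contained in any proper state-filter) if and only if for every a ∉ F there is an integer n ≥ 1 such that (σ(a)ⁿ)⁻ ∈ F. -/
/-- A BL-algebra: a bounded lattice with a commutative monoid operation `mul` (⊙, with unit ⊤)
and a residuum `imp` (→) satisfying residuation, divisibility and prelinearity.
The constants 0 and 1 of the BL-algebra are `⊥` and `⊤`. -/
structure BLAlgebra (α : Type*) [Lattice α] [BoundedOrder α] where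
  mul : α → α → α
  imp : α → α → α
  mul_comm : ∀ a b : α, mul a b = mul b a
  mul_assoc : ∀ a b c : α, mul (mul a b) c = mul a (mul b c)
  mul_top : ∀ a : α, mul a ⊤ = a
  le_imp_iff : ∀ a b c : α, c ≤ imp a b ↔ mul a c ≤ b
  inf_eq_mul_imp : ∀ a b : α, a ⊓ b = mul a (imp a b)
  sup_imp_eq_top : ∀ a b : α, imp a b ⊔ imp b a = ⊤

namespace BLAlgebra

variable {α : Type*} [Lattice α] [BoundedOrder α]

/-- Negation `x⁻ := x → 0`. -/
def neg (A : BLAlgebra α) (x : α) : α := A.imp x ⊥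

/-- Powers: `x⁰ = 1`, `xⁿ⁺¹ = xⁿ ⊙ x`. -/
def pow (A : BLAlgebra α) (x : α) : ℕ → α
  | 0 => ⊤
  | n + 1 => A.mul (A.pow x n) x

/-- A state-operator on a BL-algebra. -/
def IsStateOperator (A : BLAlgebra α) (σ : α → α) : Prop :=
  σ ⊥ = ⊥ ∧
  (∀ x y : α, σ (A.imp x y) = A.imp (σ x) (σ (x ⊓ y))) ∧
  (∀ x y : α, σ (A.mul x y) = A.mul (σ x) (σ (A.imp x (A.mul x y)))) ∧
  (∀ x y : α, σ (A.mul (σ x) (σ y)) = A.mul (σ x) (σ y)) ∧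
  (∀ x y : α, σ (A.imp (σ x) (σ y)) = A.imp (σ x) (σ y))

/-- A strong state-operator: axioms (1), (2), (3′), (4), (5). -/
def IsStrongStateOperator (A : BLAlgebra α) (σ : α → α) : Prop :=
  σ ⊥ = ⊥ ∧
  (∀ x y : α, σ (A.imp x y) = A.imp (σ x) (σ (x ⊓ y))) ∧
  (∀ x y : α, σ (A.mul x y) = A.mul (σ x) (σ (A.neg x ⊔ y))) ∧
  (∀ x y : α, σ (A.mul (σ x) (σ y)) = A.mul (σ x) (σ y)) ∧
  (∀ x y : α, σ (A.imp (σ x) (σ y)) = A.imp (σ x) (σ y))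

/-- A state-morphism-operator: axioms (1), (2), (4), (5), (6). -/
def IsStateMorphismOperator (A : BLAlgebra α) (σ : α → α) : Prop :=
  σ ⊥ = ⊥ ∧
  (∀ x y : α, σ (A.imp x y) = A.imp (σ x) (σ (x ⊓ y))) ∧
  (∀ x y : α, σ (A.mul (σ x) (σ y)) = A.mul (σ x) (σ y)) ∧
  (∀ x y : α, σ (A.imp (σ x) (σ y)) = A.imp (σ x) (σ y)) ∧
  (∀ x y : α, σ (A.mul x y) = A.mul (σ x) (σ y))

/-- A filter of a BL-algebra: nonempty, closed under ⊙, upward closed. -/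
def IsFilter (A : BLAlgebra α) (F : Set α) : Prop :=
  F.Nonempty ∧ (∀ x ∈ F, ∀ y ∈ F, A.mul x y ∈ F) ∧ ∀ x ∈ F, ∀ y : α, x ≤ y → y ∈ F

/-- A filter of the subalgebra carried by the subset `S`. -/
def IsFilterOn (A : BLAlgebra α) (S F : Set α) : Prop :=
  F ⊆ S ∧ F.Nonempty ∧ (∀ x ∈ F, ∀ y ∈ F, A.mul x y ∈ F) ∧
    ∀ x ∈ F, ∀ y ∈ S, x ≤ y → y ∈ F

/-- A state-filter of `(A, σ)`: a filter closed under `σ`. -/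
def IsStateFilter (A : BLAlgebra α) (σ : α → α) (F : Set α) : Prop :=
  A.IsFilter F ∧ ∀ x ∈ F, σ x ∈ F

/-- A maximal filter: a proper filter not properly contained in any proper filter. -/
def IsMaximalFilter (A : BLAlgebra α) (F : Set α) : Prop :=
  A.IsFilter F ∧ F ≠ Set.univ ∧
    ∀ G : Set α, A.IsFilter G → G ≠ Set.univ → F ⊆ G → F = G

/-- A maximal filter of the subalgebra carried by `S`. -/
def IsMaximalFilterOn (A : BLAlgebra α) (S F : Set α) : Prop :=
  A.IsFilterOn S F ∧ F ≠ S ∧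
    ∀ G : Set α, A.IsFilterOn S G → G ≠ S → F ⊆ G → F = G

/-- A maximal state-filter of `(A, σ)`. -/
def IsMaximalStateFilter (A : BLAlgebra α) (σ : α → α) (F : Set α) : Prop :=
  A.IsStateFilter σ F ∧ F ≠ Set.univ ∧
    ∀ G : Set α, A.IsStateFilter σ G → G ≠ Set.univ → F ⊆ G → F = G

/-- The radical: the intersection of all maximal filters. -/
def Rad (A : BLAlgebra α) : Set α :=
  {x : α | ∀ F : Set α, A.IsMaximalFilter F → x ∈ F}

/-- The radical of the subalgebra carried by `S`. -/
def RadOn (A : BLAlgebra α) (S : Set α) : Set α :=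
  {x : α | x ∈ S ∧ ∀ F : Set α, A.IsMaximalFilterOn S F → x ∈ F}

/-- The kernel of a state-operator. -/
def Ker (_A : BLAlgebra α) (σ : α → α) : Set α := {x : α | σ x = ⊤}

end BLAlgebra


namespace BLAlgebra

section Aux
variable {α : Type*} [Lattice α] [BoundedOrder α] (A : BLAlgebra α)

lemma mul_mono_right {b c : α} (h : b ≤ c) (a : α) : A.mul a b ≤ A.mul a c := by
  have h1 : c ≤ A.imp a (A.mul a c) := (A.le_imp_iff _ _ _).mpr le_rfl
  exact (A.le_imp_iff _ _ _).mp (h.trans h1)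

lemma mul_mono {a b c d : α} (h1 : a ≤ b) (h2 : c ≤ d) : A.mul a c ≤ A.mul b d :=
  calc A.mul a c ≤ A.mul a d := A.mul_mono_right h2 a
    _ = A.mul d a := A.mul_comm _ _
    _ ≤ A.mul d b := A.mul_mono_right h1 d
    _ = A.mul b d := A.mul_comm _ _

lemma top_mul (a : α) : A.mul ⊤ a = a := by rw [A.mul_comm, A.mul_top]

lemma mul_le_left (a b : α) : A.mul a b ≤ a :=
  (A.mul_mono_right le_top a).trans_eq (A.mul_top a)

lemma mul_le_right (a b : α) : A.mul a b ≤ b := by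
  rw [A.mul_comm]; exact A.mul_le_left b a

lemma imp_self (a : α) : A.imp a a = ⊤ :=
  le_antisymm le_top ((A.le_imp_iff _ _ _).mpr ((A.mul_top a).le))

lemma top_imp (a : α) : A.imp ⊤ a = a := by
  apply le_antisymm
  · have h := (A.le_imp_iff ⊤ a (A.imp ⊤ a)).mp le_rfl
    rwa [A.top_mul] at h
  · exact (A.le_imp_iff _ _ _).mpr ((A.top_mul a).le)

lemma mul_neg (a : α) : A.mul a (A.neg a) = ⊥ := by
  have h := (A.inf_eq_mul_imp a ⊥).symm
  rw [inf_bot_eq] at h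
  exact h

lemma imp_antitone_left {a b : α} (h : a ≤ b) (c : α) : A.imp b c ≤ A.imp a c := by
  apply (A.le_imp_iff _ _ _).mpr
  calc A.mul a (A.imp b c) ≤ A.mul b (A.imp b c) := A.mul_mono h le_rfl
    _ = b ⊓ c := (A.inf_eq_mul_imp b c).symm
    _ ≤ c := inf_le_right

lemma mul_mul_mul_comm (a b c d : α) :
    A.mul (A.mul a b) (A.mul c d) = A.mul (A.mul a c) (A.mul b d) := by
  rw [A.mul_assoc, A.mul_assoc, ← A.mul_assoc b c d, A.mul_comm b c, A.mul_assoc c b d]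

lemma pow_zero (x : α) : A.pow x 0 = ⊤ := rfl

lemma pow_succ (x : α) (n : ℕ) : A.pow x (n + 1) = A.mul (A.pow x n) x := rfl

lemma pow_add (x : α) (m n : ℕ) : A.pow x (m + n) = A.mul (A.pow x m) (A.pow x n) := by
  induction n with
  | zero => rw [Nat.add_zero, pow_zero, A.mul_top]
  | succ n ih =>
    rw [← Nat.add_assoc, pow_succ, pow_succ, ih, A.mul_assoc]

lemma pow_mono {x y : α} (h : x ≤ y) (n : ℕ) : A.pow x n ≤ A.pow y n := by
  induction n with
  | zero => exact le_rfl
  | succ n ih => exact A.mul_mono ih h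

lemma pow_succ_le (x : α) (n : ℕ) : A.pow x (n + 1) ≤ A.pow x n := A.mul_le_left _ _

lemma pow_mul_self (x : α) (n : ℕ) :
    A.pow (A.mul x x) n = A.mul (A.pow x n) (A.pow x n) := by
  induction n with
  | zero => rw [pow_zero, pow_zero, A.mul_top]
  | succ n ih => rw [pow_succ, pow_succ, ih, A.mul_mul_mul_comm]

section State
variable (σ : α → α) (hσ : A.IsStateOperator σ)
include hσ

lemma sigma_top : σ ⊤ = ⊤ := by
  have h := hσ.2.1 (⊤ : α) ⊤
  rw [A.imp_self, inf_idem] at h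
  rw [h, A.imp_self]

lemma sigma_mono {x y : α} (h : x ≤ y) : σ x ≤ σ y := by
  have hx : x = A.mul y (A.imp y x) := by
    rw [← A.inf_eq_mul_imp, inf_eq_right.mpr h]
  calc σ x = σ (A.mul y (A.imp y x)) := by rw [← hx]
    _ = A.mul (σ y) (σ (A.imp y (A.mul y (A.imp y x)))) := hσ.2.2.1 y (A.imp y x)
    _ ≤ σ y := A.mul_le_left _ _

lemma sigma_mul_le (x y : α) : A.mul (σ x) (σ y) ≤ σ (A.mul x y) := by
  rw [hσ.2.2.1 x y]
  exact A.mul_mono_right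
    (A.sigma_mono σ hσ ((A.le_imp_iff _ _ _).mpr le_rfl)) (σ x)

lemma sigma_sigma (x : α) : σ (σ x) = σ x := by
  have h5 := hσ.2.2.2.2 (⊤ : α) x
  rwa [A.sigma_top σ hσ, A.top_imp] at h5

lemma sigma_pow_le (x : α) (n : ℕ) : A.pow (σ x) n ≤ σ (A.pow x n) := by
  induction n with
  | zero => rw [A.pow_zero, A.pow_zero, A.sigma_top σ hσ]
  | succ n ih =>
    calc A.pow (σ x) (n + 1) = A.mul (A.pow (σ x) n) (σ x) := rfl
      _ ≤ A.mul (σ (A.pow x n)) (σ x) := A.mul_mono ih le_rfl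
      _ ≤ σ (A.mul (A.pow x n) x) := A.sigma_mul_le σ hσ _ _
      _ = σ (A.pow x (n + 1)) := rfl

end State

lemma top_mem_of_filter {F : Set α} (hF : A.IsFilter F) : (⊤ : α) ∈ F := by
  obtain ⟨f, hf⟩ := hF.1
  exact hF.2.2 f hf ⊤ le_top

end Aux

end BLAlgebra


/-- a proper state-filter F of (A, σ) is a maximal state-filter iff for every
a ∉ F there is n ≥ 1 with (σ(a)ⁿ)⁻ ∈ F. -/

theorem maximal_stateFilter_iff {α : Type*} [Lattice α] [BoundedOrder α]
    (A : BLAlgebra α) (σ : α → α) (hσ : A.IsStateOperator σ)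
    (F : Set α) (hF : A.IsStateFilter σ F) (hproper : F ≠ Set.univ) :
    (∀ G : Set α, A.IsStateFilter σ G → G ≠ Set.univ → F ⊆ G → F = G) ↔
    ∀ a : α, a ∉ F → ∃ n : ℕ, 1 ≤ n ∧ A.neg (A.pow (σ a) n) ∈ F := by
  obtain ⟨⟨hFne, hFmul, hFup⟩, hFσ⟩ := hF
  constructor
  · -- maximality → power condition
    intro hmax a haF
    set b : α := A.mul a (σ a) with hb
    have hbσa : b ≤ σ a := A.mul_le_right a (σ a)
    have hba : b ≤ a := A.mul_le_left a (σ a)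
    have hσb : A.mul (σ a) (σ a) ≤ σ b := by
      calc A.mul (σ a) (σ a) = A.mul (σ a) (σ (σ a)) := by
            rw [A.sigma_sigma σ hσ]
        _ ≤ σ (A.mul a (σ a)) := A.sigma_mul_le σ hσ _ _
    set G : Set α := {x | ∃ n : ℕ, ∃ f ∈ F, A.mul f (A.pow b n) ≤ x} with hGdef
    have hFG : F ⊆ G := fun x hx => ⟨0, x, hx, by rw [A.pow_zero, A.mul_top]⟩
    have haG : a ∈ G := by
      refine ⟨1, ⊤, A.top_mem_of_filter ⟨hFne, hFmul, hFup⟩, ?_⟩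
      rw [A.pow_succ, A.pow_zero, A.top_mul, A.top_mul]
      exact hba
    have hG : A.IsStateFilter σ G := by
      refine ⟨⟨⟨⊤, hFG (A.top_mem_of_filter ⟨hFne, hFmul, hFup⟩)⟩, ?_, ?_⟩, ?_⟩
      · rintro x ⟨n, f, hf, hle⟩ y ⟨m, g, hg, hle'⟩
        refine ⟨n + m, A.mul f g, hFmul f hf g hg, ?_⟩
        calc A.mul (A.mul f g) (A.pow b (n + m))
            = A.mul (A.mul f g) (A.mul (A.pow b n) (A.pow b m)) := by rw [A.pow_add]
          _ = A.mul (A.mul f (A.pow b n)) (A.mul g (A.pow b m)) := A.mul_mul_mul_comm _ _ _ _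
          _ ≤ A.mul x y := A.mul_mono hle hle'
      · rintro x ⟨n, f, hf, hle⟩ y hxy
        exact ⟨n, f, hf, hle.trans hxy⟩
      · rintro x ⟨n, f, hf, hle⟩
        refine ⟨n + n, σ f, hFσ f hf, ?_⟩
        have h1 : A.pow b (n + n) ≤ A.pow (σ b) n := by
          calc A.pow b (n + n) = A.mul (A.pow b n) (A.pow b n) := A.pow_add b n n
            _ = A.pow (A.mul b b) n := (A.pow_mul_self b n).symm
            _ ≤ A.pow (σ b) n := by
                refine A.pow_mono ?_ n
                exact (A.mul_mono hbσa hbσa).trans hσb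
        calc A.mul (σ f) (A.pow b (n + n))
            ≤ A.mul (σ f) (A.pow (σ b) n) := A.mul_mono le_rfl h1
          _ ≤ A.mul (σ f) (σ (A.pow b n)) := A.mul_mono le_rfl (A.sigma_pow_le σ hσ b n)
          _ ≤ σ (A.mul f (A.pow b n)) := A.sigma_mul_le σ hσ _ _
          _ ≤ σ x := A.sigma_mono σ hσ hle
    have hbot : (⊥ : α) ∈ G := by
      by_contra hbG
      have hGu : G ≠ Set.univ := fun h => hbG (h ▸ Set.mem_univ ⊥)
      have hFeq := hmax G hG hGu hFG
      exact haF (hFeq ▸ haG)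
    obtain ⟨n, f, hf, hle⟩ := hbot
    -- apply σ
    have h2 : A.mul (σ f) (A.pow (σ a) (n + n)) ≤ ⊥ := by
      have hσle : σ (A.mul f (A.pow b n)) ≤ σ (⊥ : α) := A.sigma_mono σ hσ hle
      rw [hσ.1] at hσle
      refine le_trans ?_ hσle
      calc A.mul (σ f) (A.pow (σ a) (n + n))
          = A.mul (σ f) (A.pow (A.mul (σ a) (σ a)) n) := by
            rw [A.pow_mul_self, A.pow_add]
        _ ≤ A.mul (σ f) (A.pow (σ b) n) := A.mul_mono le_rfl (A.pow_mono hσb n)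
        _ ≤ A.mul (σ f) (σ (A.pow b n)) := A.mul_mono le_rfl (A.sigma_pow_le σ hσ b n)
        _ ≤ σ (A.mul f (A.pow b n)) := A.sigma_mul_le σ hσ _ _
    have h3 : σ f ≤ A.neg (A.pow (σ a) (n + n)) := by
      apply (A.le_imp_iff _ _ _).mpr
      rw [A.mul_comm]
      exact h2
    have h4 : A.neg (A.pow (σ a) (n + n)) ∈ F := hFup (σ f) (hFσ f hf) _ h3
    refine ⟨n + n + 1, Nat.le_add_left 1 (n + n), ?_⟩
    exact hFup _ h4 _ (A.imp_antitone_left (A.pow_succ_le (σ a) (n + n)) ⊥)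
  · -- power condition → maximality
    intro h G hG hGu hFG
    by_contra hne
    have : ∃ a, a ∈ G ∧ a ∉ F := by
      by_contra hno
      push_neg at hno
      exact hne (Set.Subset.antisymm hFG hno)
    obtain ⟨a, haG, haF⟩ := this
    obtain ⟨n, -, hnegF⟩ := h a haF
    have hσaG : σ a ∈ G := hG.2 a haG
    have hpowG : A.pow (σ a) n ∈ G := by
      clear hnegF
      induction n with
      | zero => exact A.top_mem_of_filter hG.1
      | succ n ih => exact hG.1.2.1 _ ih _ hσaG
    have hnegG : A.neg (A.pow (σ a) n) ∈ G := hFG hnegF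
    have hbotG : (⊥ : α) ∈ G := by
      have := hG.1.2.1 _ hpowG _ hnegG
      rwa [A.mul_neg] at this
    apply hGu
    ext x
    simp only [Set.mem_univ, iff_true]
    exact hG.1.2.2 ⊥ hbotG x bot_le
end

section
/- Let (A, σ) be a state BL-algebra. (a) If I is a state-filter of (A, σ), then σ(I) = I ∩ σ(A) and σ(I) is a filter of the BL-algebra σ(A); if moreover I is a maximal state-filter, then σ(I) is a maximal filter of σ(A). (b) If I is a filter of σ(A), then σ⁻¹(I) is a state-filter of (A, σ) with σ⁻¹(I) ∩ σ(A) = I; if moreover I is a maximal filter of σ(A), then σ⁻¹(I) is a maximal state-filter of (A, σ). -/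
namespace StateBLAux

open BLAlgebra

variable {α : Type*} [Lattice α] [BoundedOrder α] (A : BLAlgebra α)

theorem imp_self' (a : α) : A.imp a a = ⊤ :=
  le_antisymm le_top ((A.le_imp_iff a a ⊤).mpr (le_of_eq (A.mul_top a)))

theorem mul_le_left' (a b : α) : A.mul a b ≤ a :=
  (A.le_imp_iff a a b).mp (by rw [imp_self']; exact le_top)

theorem mul_mono_right' {b c : α} (a : α) (h : b ≤ c) : A.mul a b ≤ A.mul a c :=
  (A.le_imp_iff a (A.mul a c) b).mp
    (le_trans h ((A.le_imp_iff a (A.mul a c) c).mpr le_rfl))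

variable {σ : α → α}

theorem sigma_top (hσ : A.IsStateOperator σ) : σ ⊤ = ⊤ := by
  have h := hσ.2.1 ⊤ ⊤
  simp only [inf_idem, imp_self'] at h
  exact h

theorem sigma_idem (hσ : A.IsStateOperator σ) (x : α) : σ (σ x) = σ x := by
  have h := hσ.2.2.2.1 x ⊤
  rw [sigma_top A hσ, A.mul_top] at h
  exact h

theorem sigma_fix (hσ : A.IsStateOperator σ) {x : α} (h : x ∈ Set.range σ) : σ x = x := by
  obtain ⟨y, rfl⟩ := h; exact sigma_idem A hσ y

theorem sigma_mono (hσ : A.IsStateOperator σ) {x y : α} (h : x ≤ y) : σ x ≤ σ y := by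
  have hx : A.mul y (A.imp y x) = x := by
    rw [← A.inf_eq_mul_imp]; exact inf_eq_right.mpr h
  calc σ x = σ (A.mul y (A.imp y x)) := by rw [hx]
    _ = A.mul (σ y) (σ (A.imp y (A.mul y (A.imp y x)))) := hσ.2.2.1 y (A.imp y x)
    _ ≤ σ y := mul_le_left' A _ _

theorem sigma_mul_ge (hσ : A.IsStateOperator σ) (x y : α) : A.mul (σ x) (σ y) ≤ σ (A.mul x y) := by
  rw [hσ.2.2.1 x y]
  exact mul_mono_right' A _
    (sigma_mono A hσ ((A.le_imp_iff x (A.mul x y) y).mpr le_rfl))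

theorem bot_filter_univ {F : Set α} (hF : A.IsFilter F) (h : ⊥ ∈ F) : F = Set.univ :=
  Set.eq_univ_of_forall fun x => hF.2.2 ⊥ h x bot_le

theorem bot_filterOn {S F : Set α} (hF : A.IsFilterOn S F) (h : ⊥ ∈ F) : F = S :=
  Set.Subset.antisymm hF.1 fun x hx => hF.2.2.2 ⊥ h x hx bot_le

theorem aux_a (hσ : A.IsStateOperator σ) {I : Set α} (hI : A.IsStateFilter σ I) :
    σ '' I = I ∩ Set.range σ ∧ A.IsFilterOn (Set.range σ) (σ '' I) := by
  obtain ⟨⟨hne, hmul, hup⟩, hst⟩ := hI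
  have himg : σ '' I = I ∩ Set.range σ := by
    ext x; constructor
    · rintro ⟨y, hy, rfl⟩
      exact ⟨hst y hy, y, rfl⟩
    · rintro ⟨hxI, hxr⟩
      exact ⟨x, hxI, sigma_fix A hσ hxr⟩
  refine ⟨himg, ?_, ?_, ?_, ?_⟩
  · rintro x ⟨y, _, rfl⟩; exact ⟨y, rfl⟩
  · obtain ⟨x, hx⟩ := hne; exact ⟨σ x, x, hx, rfl⟩
  · rw [himg]
    rintro x ⟨hxI, hxr⟩ y ⟨hyI, hyr⟩
    have h4 := hσ.2.2.2.1 x y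
    rw [sigma_fix A hσ hxr, sigma_fix A hσ hyr] at h4
    exact ⟨hmul x hxI y hyI, A.mul x y, h4⟩
  · rw [himg]
    rintro x ⟨hxI, _⟩ y hyr hxy
    exact ⟨hup x hxI y hxy, hyr⟩

theorem aux_b (hσ : A.IsStateOperator σ) {I : Set α} (hI : A.IsFilterOn (Set.range σ) I) :
    A.IsStateFilter σ (σ ⁻¹' I) ∧ σ ⁻¹' I ∩ Set.range σ = I := by
  obtain ⟨hsub, hne, hmul, hup⟩ := hI
  constructor
  · refine ⟨⟨?_, ?_, ?_⟩, ?_⟩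
    · obtain ⟨g, hg⟩ := hne
      exact ⟨g, show σ g ∈ I by rw [sigma_fix A hσ (hsub hg)]; exact hg⟩
    · intro x hx y hy
      exact hup _ (hmul _ hx _ hy) _ ⟨A.mul x y, rfl⟩ (sigma_mul_ge A hσ x y)
    · intro x hx y hxy
      exact hup _ hx _ ⟨y, rfl⟩ (sigma_mono A hσ hxy)
    · intro x hx
      show σ (σ x) ∈ I
      rw [sigma_idem A hσ]; exact hx
  · ext x; constructor
    · rintro ⟨hx, hxr⟩
      rw [← sigma_fix A hσ hxr]; exact hx
    · intro hx
      exact ⟨show σ x ∈ I by rw [sigma_fix A hσ (hsub hx)]; exact hx, hsub hx⟩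

end StateBLAux

/-- (a) the image of a (maximal) state-filter of (A, σ) is a (maximal) filter
of σ(A), and σ(I) = I ∩ σ(A); (b) the preimage of a (maximal) filter of σ(A) is a (maximal)
state-filter of (A, σ), and σ⁻¹(I) ∩ σ(A) = I. -/
theorem stateFilter_image_preimage {α : Type*} [Lattice α] [BoundedOrder α]
    (A : BLAlgebra α) (σ : α → α) (hσ : A.IsStateOperator σ) :
    (∀ I : Set α, A.IsStateFilter σ I →
      (σ '' I = I ∩ Set.range σ ∧ A.IsFilterOn (Set.range σ) (σ '' I)) ∧
      (A.IsMaximalStateFilter σ I → A.IsMaximalFilterOn (Set.range σ) (σ '' I))) ∧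
    (∀ I : Set α, A.IsFilterOn (Set.range σ) I →
      (A.IsStateFilter σ (σ ⁻¹' I) ∧ σ ⁻¹' I ∩ Set.range σ = I) ∧
      (A.IsMaximalFilterOn (Set.range σ) I → A.IsMaximalStateFilter σ (σ ⁻¹' I))) := by


  classical
  have hbotr : (⊥ : α) ∈ Set.range σ := ⟨⊥, hσ.1⟩
  constructor
  · intro I hI
    refine ⟨StateBLAux.aux_a A hσ hI, ?_⟩
    rintro ⟨⟨hIf, hIσ⟩, hIne, hImax⟩
    obtain ⟨himg, hfil⟩ := StateBLAux.aux_a A hσ ⟨hIf, hIσ⟩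
    refine ⟨hfil, ?_, ?_⟩
    · intro heq
      apply hIne
      have hbI : (⊥ : α) ∈ I := by
        have hb : (⊥ : α) ∈ σ '' I := heq ▸ hbotr
        rw [himg] at hb; exact hb.1
      exact StateBLAux.bot_filter_univ A hIf hbI
    · intro G hG hGne hsub
      obtain ⟨hGsf, hGeq⟩ := StateBLAux.aux_b A hσ hG
      have hIH : I ⊆ σ ⁻¹' G := fun x hx => hsub ⟨x, hx, rfl⟩
      have hHne : σ ⁻¹' G ≠ Set.univ := by
        intro h
        apply hGne
        have hbG : (⊥ : α) ∈ G := by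
          have hb : (⊥ : α) ∈ σ ⁻¹' G := h ▸ Set.mem_univ ⊥
          simpa [hσ.1] using hb
        exact StateBLAux.bot_filterOn A hG hbG
      have hIeq : I = σ ⁻¹' G := hImax _ hGsf hHne hIH
      rw [himg, hIeq, hGeq]
  · intro I hI
    refine ⟨StateBLAux.aux_b A hσ hI, ?_⟩
    rintro ⟨hIf, hIne, hImax⟩
    obtain ⟨hpre, hpeq⟩ := StateBLAux.aux_b A hσ hIf
    refine ⟨hpre, ?_, ?_⟩
    · intro h
      apply hIne
      have hbI : (⊥ : α) ∈ I := by
        have hb : (⊥ : α) ∈ σ ⁻¹' I := h ▸ Set.mem_univ ⊥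
        simpa [hσ.1] using hb
      exact StateBLAux.bot_filterOn A hIf hbI
    · intro G hG hGne hsub
      obtain ⟨himg, hfil⟩ := StateBLAux.aux_a A hσ hG
      have hIG : I ⊆ σ '' G := by
        intro g hg
        rw [himg]
        refine ⟨hsub ?_, hIf.1 hg⟩
        show σ g ∈ I
        rw [StateBLAux.sigma_fix A hσ (hIf.1 hg)]; exact hg
      have hGne' : σ '' G ≠ Set.range σ := by
        intro h
        apply hGne
        have hbG : (⊥ : α) ∈ G := by
          have hb : (⊥ : α) ∈ σ '' G := h ▸ hbotr
          rw [himg] at hb; exact hb.1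
        exact StateBLAux.bot_filter_univ A hG.1 hbG
      have hIeq : I = σ '' G := hImax _ hfil hGne' hIG
      apply Set.Subset.antisymm hsub
      intro x hxG
      show σ x ∈ I
      rw [hIeq, himg]
      exact ⟨hG.2 x hxG, x, rfl⟩
end

section
/- Let (A, σ) be a state-morphism BL-algebra. Then the BL-algebra σ(A) is simple (has exactly two filters) if and only if Ker(σ) := {x ∈ A : σ(x) = 1} is a maximal filter of A. -/
section Aux

variable {α : Type*} [Lattice α] [BoundedOrder α]

lemma BL_top_mul (A : BLAlgebra α) (a : α) : A.mul ⊤ a = a := by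
  rw [A.mul_comm, A.mul_top]

lemma BL_imp_eq_top_iff (A : BLAlgebra α) (a b : α) : A.imp a b = ⊤ ↔ a ≤ b := by
  constructor
  · intro h
    have := (A.le_imp_iff a b ⊤).mp (le_of_eq h.symm)
    rwa [A.mul_top] at this
  · intro h
    refine le_antisymm le_top ((A.le_imp_iff a b ⊤).mpr ?_)
    rwa [A.mul_top]

lemma BL_top_imp (A : BLAlgebra α) (a : α) : A.imp ⊤ a = a := by
  apply le_antisymm
  · have := (A.le_imp_iff ⊤ a (A.imp ⊤ a)).mp le_rfl
    rwa [BL_top_mul] at this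
  · refine (A.le_imp_iff ⊤ a a).mpr ?_
    rw [BL_top_mul]

lemma BL_mul_mono_left (A : BLAlgebra α) {a b : α} (c : α) (h : a ≤ b) :
    A.mul a c ≤ A.mul b c := by
  have h1 : b ≤ A.imp c (A.mul b c) :=
    (A.le_imp_iff c (A.mul b c) b).mpr (le_of_eq (A.mul_comm c b))
  have := (A.le_imp_iff c (A.mul b c) a).mp (le_trans h h1)
  rwa [A.mul_comm] at this

lemma BL_mul_mono (A : BLAlgebra α) {a b c d : α} (h1 : a ≤ b) (h2 : c ≤ d) :
    A.mul a c ≤ A.mul b d := by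
  calc A.mul a c ≤ A.mul b c := BL_mul_mono_left A c h1
    _ = A.mul c b := A.mul_comm b c
    _ ≤ A.mul d b := BL_mul_mono_left A b h2
    _ = A.mul b d := A.mul_comm d b

lemma BL_mul_le_left (A : BLAlgebra α) (a b : α) : A.mul a b ≤ a := by
  have h := BL_mul_mono_left A a (le_top (a := b))
  rw [BL_top_mul] at h
  calc A.mul a b = A.mul b a := A.mul_comm a b
    _ ≤ a := h

lemma BL_mul_mul (A : BLAlgebra α) (a b c d : α) :
    A.mul (A.mul a b) (A.mul c d) = A.mul (A.mul a c) (A.mul b d) := by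
  rw [A.mul_assoc a b (A.mul c d), ← A.mul_assoc b c d, A.mul_comm b c,
    A.mul_assoc c b d, ← A.mul_assoc a c (A.mul b d)]

lemma BL_pow_succ (A : BLAlgebra α) (x : α) (n : ℕ) :
    A.pow x (n + 1) = A.mul (A.pow x n) x := rfl

lemma BL_pow_one (A : BLAlgebra α) (x : α) : A.pow x 1 = x := by
  rw [BL_pow_succ]
  show A.mul ⊤ x = x
  exact BL_top_mul A x

lemma BL_pow_add (A : BLAlgebra α) (x : α) (n m : ℕ) :
    A.pow x (n + m) = A.mul (A.pow x n) (A.pow x m) := by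
  induction m with
  | zero => show A.pow x n = _; rw [show A.pow x 0 = ⊤ from rfl, A.mul_top]
  | succ m ih =>
    rw [show n + (m+1) = (n + m) + 1 from rfl, BL_pow_succ, ih, BL_pow_succ,
      A.mul_assoc]

section SM

variable {A : BLAlgebra α} {σ : α → α} (hσ : A.IsStateMorphismOperator σ)

include hσ

lemma sm_top : σ ⊤ = ⊤ := by
  have hb : A.imp ⊥ ⊥ = ⊤ := (BL_imp_eq_top_iff A ⊥ ⊥).mpr le_rfl
  calc σ ⊤ = σ (A.imp ⊥ ⊥) := by rw [hb]
    _ = A.imp (σ ⊥) (σ (⊥ ⊓ ⊥)) := hσ.2.1 ⊥ ⊥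
    _ = ⊤ := by rw [inf_idem, hσ.1, hb]

lemma sm_inf_le (x y : α) : σ (x ⊓ y) ≤ σ x := by
  rw [A.inf_eq_mul_imp, hσ.2.2.2.2]
  exact BL_mul_le_left A _ _

lemma sm_mono {x y : α} (h : x ≤ y) : σ x ≤ σ y := by
  have h2 := sm_inf_le hσ y x
  rwa [inf_eq_right.mpr h] at h2

lemma sm_idem (x : α) : σ (σ x) = σ x := by
  have h5 := hσ.2.2.2.1 ⊤ x
  rwa [sm_top hσ, BL_top_imp] at h5

lemma sm_pow (x : α) (n : ℕ) : σ (A.pow x n) = A.pow (σ x) n := by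
  induction n with
  | zero => exact sm_top hσ
  | succ n ih => rw [BL_pow_succ, BL_pow_succ, hσ.2.2.2.2, ih]

lemma sm_range_mul {a b : α} (ha : a ∈ Set.range σ) (hb : b ∈ Set.range σ) :
    A.mul a b ∈ Set.range σ := by
  obtain ⟨u, rfl⟩ := ha; obtain ⟨v, rfl⟩ := hb
  exact ⟨A.mul (σ u) (σ v), hσ.2.2.1 u v⟩

lemma sm_ker_filter : A.IsFilter (A.Ker σ) := by
  refine ⟨⟨⊤, sm_top hσ⟩, ?_, ?_⟩
  · intro x hx y hy
    show σ (A.mul x y) = ⊤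
    rw [hσ.2.2.2.2 x y, hx, hy, A.mul_top]
  · intro x hx y hxy
    have h2 := sm_mono hσ hxy
    rw [hx] at h2
    exact le_antisymm le_top h2

lemma sm_filterOn_top {F : Set α} (hF : A.IsFilterOn (Set.range σ) F) : ⊤ ∈ F := by
  obtain ⟨y, hy⟩ := hF.2.1
  exact hF.2.2.2 y hy ⊤ ⟨⊤, sm_top hσ⟩ le_top

end SM

lemma BL_filterOn_pow_mem (A : BLAlgebra α) {S F : Set α} (hF : A.IsFilterOn S F)
    {x : α} (hx : x ∈ F) (n : ℕ) : A.pow x (n + 1) ∈ F := by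
  induction n with
  | zero => rwa [BL_pow_one]
  | succ n ih => rw [BL_pow_succ]; exact hF.2.2.1 _ ih _ hx

lemma BL_filter_pow_mem (A : BLAlgebra α) {F : Set α} (hF : A.IsFilter F)
    {x : α} (hx : x ∈ F) (n : ℕ) : A.pow x (n + 1) ∈ F := by
  induction n with
  | zero => rwa [BL_pow_one]
  | succ n ih => rw [BL_pow_succ]; exact hF.2.1 _ ih _ hx

end Aux

/-- for a state-morphism BL-algebra (A, σ), the BL-algebra σ(A) is simple
(it has exactly two filters, {⊤} and σ(A)) iff Ker(σ) is a maximal filter of A. -/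
theorem image_simple_iff_ker_maximal {α : Type*} [Lattice α] [BoundedOrder α]
    (A : BLAlgebra α) (σ : α → α) (hσ : A.IsStateMorphismOperator σ) :
    ({F : Set α | A.IsFilterOn (Set.range σ) F} = {{⊤}, Set.range σ} ∧
      ({⊤} : Set α) ≠ Set.range σ) ↔
    A.IsMaximalFilter (A.Ker σ) := by
  constructor
  · rintro ⟨hset, hne⟩
    have hbt : (⊥ : α) ≠ ⊤ := by
      intro h
      apply hne
      ext y
      simp only [Set.mem_singleton_iff]
      constructor
      · rintro rfl; exact ⟨⊤, sm_top hσ⟩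
      · intro _
        refine le_antisymm le_top ?_
        rw [← h]; exact bot_le
    refine ⟨sm_ker_filter hσ, ?_, ?_⟩
    · intro h
      have hb : (⊥ : α) ∈ A.Ker σ := by rw [h]; trivial
      have hb2 : σ (⊥ : α) = ⊤ := hb
      rw [hσ.1] at hb2
      exact hbt hb2
    · intro G hG hGp hKG
      refine Set.Subset.antisymm hKG fun x hxG => ?_
      -- the principal filter of σ x in the range of σ
      set H : Set α := {z | z ∈ Set.range σ ∧ ∃ n, A.pow (σ x) n ≤ z} with hHdef
      have hHfil : A.IsFilterOn (Set.range σ) H := by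
        refine ⟨fun z hz => hz.1, ⟨⊤, ⟨⊤, sm_top hσ⟩, 0, le_top⟩, ?_, ?_⟩
        · rintro a ⟨ha, n, hn⟩ b ⟨hb, m, hm⟩
          refine ⟨sm_range_mul hσ ha hb, n + m, ?_⟩
          rw [BL_pow_add]
          exact BL_mul_mono A hn hm
        · rintro a ⟨ha, n, hn⟩ y hy hay
          exact ⟨hy, n, le_trans hn hay⟩
      have hHmem : H ∈ ({{⊤}, Set.range σ} : Set (Set α)) := by
        rw [← hset]; exact hHfil
      rcases hHmem with hH | hH
      · -- H = {⊤}, so σ x = ⊤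
        have hx : σ x ∈ H := ⟨⟨x, rfl⟩, 1, le_of_eq (BL_pow_one A (σ x))⟩
        rw [hH] at hx
        exact hx
      · -- H = range σ, so some power of σ x is ⊥; contradiction with G proper
        exfalso
        have hb : (⊥ : α) ∈ H := by rw [hH]; exact ⟨⊥, hσ.1⟩
        obtain ⟨-, n, hn⟩ := hb
        rcases n with - | m
        · exact hbt (le_antisymm (le_trans le_top hn) bot_le).symm
        · have hpx : σ (A.pow x (m + 1)) = ⊥ := by
            rw [sm_pow hσ]
            exact le_antisymm hn bot_le
          set p := A.pow x (m + 1) with hp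
          have hneg : σ (A.imp p ⊥) = ⊤ := by
            rw [hσ.2.1 p ⊥, inf_bot_eq, hpx, hσ.1]
            exact (BL_imp_eq_top_iff A ⊥ ⊥).mpr le_rfl
          have hpG : p ∈ G := BL_filter_pow_mem A hG hxG m
          have hmul : A.mul p (A.imp p ⊥) ∈ G := hG.2.1 p hpG _ (hKG hneg)
          rw [← A.inf_eq_mul_imp, inf_bot_eq] at hmul
          apply hGp
          ext y
          simp only [Set.mem_univ, iff_true]
          exact hG.2.2 ⊥ hmul y bot_le
  · rintro ⟨hkf, hkp, hkmax⟩
    have hbt : (⊥ : α) ≠ ⊤ := by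
      intro h
      apply hkp
      ext y
      simp only [Set.mem_univ, iff_true]
      show σ y = ⊤
      refine le_antisymm le_top ?_
      rw [← h]; exact bot_le
    constructor
    · ext F
      simp only [Set.mem_setOf_eq, Set.mem_insert_iff, Set.mem_singleton_iff]
      constructor
      · intro hF
        by_cases hFt : F = {⊤}
        · exact Or.inl hFt
        · right
          have htop : ⊤ ∈ F := sm_filterOn_top hσ hF
          have : ¬ F ⊆ {⊤} := fun hsub =>
            hFt (Set.Subset.antisymm hsub (Set.singleton_subset_iff.mpr htop))
          obtain ⟨z, hzF, hzt⟩ := Set.not_subset.mp this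
          rw [Set.mem_singleton_iff] at hzt
          obtain ⟨a, ha⟩ := hF.1 hzF
          have hzfix : σ z = z := by rw [← ha, sm_idem hσ]
          have hzker : z ∉ A.Ker σ := fun h => by
            have h2 : σ z = ⊤ := h
            rw [hzfix] at h2
            exact hzt h2
          -- the filter generated by Ker σ and z
          set G : Set α := {y | ∃ n, ∃ k ∈ A.Ker σ, A.mul (A.pow z n) k ≤ y} with hGdef
          have hGfil : A.IsFilter G := by
            refine ⟨⟨⊤, 0, ⊤, sm_top hσ, le_top⟩, ?_, ?_⟩
            · rintro a ⟨n, k, hk, hle⟩ b ⟨m, k', hk', hle'⟩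
              refine ⟨n + m, A.mul k k', (sm_ker_filter hσ).2.1 k hk k' hk', ?_⟩
              rw [BL_pow_add, BL_mul_mul]
              exact BL_mul_mono A hle hle'
            · rintro a ⟨n, k, hk, hle⟩ y hay
              exact ⟨n, k, hk, le_trans hle hay⟩
          have hKG : A.Ker σ ⊆ G := by
            intro k hk
            refine ⟨0, k, hk, ?_⟩
            rw [show A.pow z 0 = ⊤ from rfl, BL_top_mul]
          have hzG : z ∈ G := by
            refine ⟨1, ⊤, sm_top hσ, ?_⟩
            rw [A.mul_top, BL_pow_one]
          have hGuniv : G = Set.univ := by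
            by_contra hGu
            exact hzker ((hkmax G hGfil hGu hKG) ▸ hzG)
          have hbG : (⊥ : α) ∈ G := by rw [hGuniv]; trivial
          obtain ⟨n, k, hk, hle⟩ := hbG
          have hσle : σ (A.mul (A.pow z n) k) ≤ σ ⊥ := sm_mono hσ hle
          rw [hσ.2.2.2.2, sm_pow hσ, hzfix, hk, A.mul_top, hσ.1] at hσle
          have hpz : A.pow z n = ⊥ := le_antisymm hσle bot_le
          rcases n with - | m
          · exact absurd hpz.symm hbt
          · have hbF : (⊥ : α) ∈ F := by
              rw [← hpz]
              exact BL_filterOn_pow_mem A hF hzF m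
            exact Set.Subset.antisymm hF.1 fun y hy => hF.2.2.2 ⊥ hbF y hy bot_le
      · rintro (rfl | rfl)
        · refine ⟨Set.singleton_subset_iff.mpr ⟨⊤, sm_top hσ⟩, ⟨⊤, rfl⟩, ?_, ?_⟩
          · rintro a rfl b rfl
            rw [Set.mem_singleton_iff, A.mul_top]
          · rintro a rfl y _ hy
            exact le_antisymm le_top hy
        · refine ⟨le_refl _, ⟨⊤, ⟨⊤, sm_top hσ⟩⟩, ?_, ?_⟩
          · intro a ha b hb
            exact sm_range_mul hσ ha hb
          · intro a _ y hy _
            exact hy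
    · intro h
      have hb : (⊥ : α) ∈ ({⊤} : Set α) := by rw [h]; exact ⟨⊥, hσ.1⟩
      exact hbt hb
end

section
/- Let (A, σ) be a state-morphism BL-algebra. Then Rad(σ(A)) = {1} (i.e., (A, σ) is semisimple) if and only if Rad(A) ⊆ Ker(σ), where Ker(σ) := {x ∈ A : σ(x) = 1}. -/
namespace BLAux
open BLAlgebra


variable {α : Type*} [Lattice α] [BoundedOrder α] (A : BLAlgebra α)

lemma imp_self (a : α) : A.imp a a = ⊤ :=
  top_unique ((A.le_imp_iff a a ⊤).mpr (by rw [A.mul_top]))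

lemma mul_le_left (a b : α) : A.mul a b ≤ a :=
  (A.le_imp_iff a a b).mp ((imp_self A a).symm ▸ le_top)

lemma mul_le_right (a b : α) : A.mul a b ≤ b := by
  rw [A.mul_comm]; exact mul_le_left A b a

lemma mul_mono_right {b c : α} (a : α) (h : b ≤ c) : A.mul a b ≤ A.mul a c :=
  (A.le_imp_iff a (A.mul a c) b).mp
    (le_trans h ((A.le_imp_iff a (A.mul a c) c).mpr le_rfl))

lemma mul_mono {a b c d : α} (h1 : a ≤ c) (h2 : b ≤ d) : A.mul a b ≤ A.mul c d :=
  calc A.mul a b ≤ A.mul a d := mul_mono_right A a h2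
    _ = A.mul d a := A.mul_comm a d
    _ ≤ A.mul d c := mul_mono_right A d h1
    _ = A.mul c d := A.mul_comm d c

lemma mul_neg_self (a : α) : A.mul a (A.imp a ⊥) = ⊥ := by
  rw [← A.inf_eq_mul_imp, inf_bot_eq]

lemma mul_left_comm (a b c : α) : A.mul a (A.mul b c) = A.mul b (A.mul a c) := by
  rw [← A.mul_assoc, A.mul_comm a b, A.mul_assoc]

lemma mul_mul_mul_comm (a b c d : α) :
    A.mul (A.mul a b) (A.mul c d) = A.mul (A.mul a c) (A.mul b d) := by
  rw [A.mul_assoc, A.mul_assoc, mul_left_comm A b c d]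

lemma pow_add (x : α) (n m : ℕ) :
    A.pow x (n + m) = A.mul (A.pow x n) (A.pow x m) := by
  induction m with
  | zero => rw [Nat.add_zero]; exact (A.mul_top _).symm
  | succ m ih =>
      show A.pow x (n + m + 1) = A.mul (A.pow x n) (A.mul (A.pow x m) x)
      show A.mul (A.pow x (n + m)) x = _
      rw [ih, A.mul_assoc]



section Filters

variable {α : Type*} [Lattice α] [BoundedOrder α] (A : BLAlgebra α)

lemma top_mem_on {S F : Set α} (h : A.IsFilterOn S F) (hTop : ⊤ ∈ S) : ⊤ ∈ F := by
  obtain ⟨f, hf⟩ := h.2.1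
  exact h.2.2.2 f hf ⊤ hTop le_top

lemma pow_mem_on {S F : Set α} (h : A.IsFilterOn S F) (hTop : ⊤ ∈ S) {x : α} (hx : x ∈ F) :
    ∀ n, A.pow x n ∈ F := by
  intro n
  induction n with
  | zero => exact top_mem_on A h hTop
  | succ n ih => exact h.2.2.1 _ ih _ hx

lemma eq_of_bot_mem_on {S F : Set α} (h : A.IsFilterOn S F) (hb : ⊥ ∈ F) : F = S :=
  Set.Subset.antisymm h.1 (fun y hy => h.2.2.2 ⊥ hb y hy bot_le)

lemma exists_maximal_on {S F : Set α} (hBotS : ⊥ ∈ S)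
    (hF : A.IsFilterOn S F) (hbot : ⊥ ∉ F) :
    ∃ M, A.IsMaximalFilterOn S M ∧ F ⊆ M := by
  have hchainub : ∀ c ⊆ {G | A.IsFilterOn S G ∧ ⊥ ∉ G}, IsChain (· ⊆ ·) c → c.Nonempty →
      ∃ ub ∈ {G | A.IsFilterOn S G ∧ ⊥ ∉ G}, ∀ s ∈ c, s ⊆ ub := by
    rintro c hc hchain ⟨F0, hF0⟩
    refine ⟨⋃₀ c, ⟨⟨?_, ?_, ?_, ?_⟩, ?_⟩, fun s hs => Set.subset_sUnion_of_mem hs⟩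
    · intro y hy
      obtain ⟨G, hGc, hyG⟩ := hy
      exact (hc hGc).1.1 hyG
    · obtain ⟨f, hf⟩ := (hc hF0).1.2.1
      exact ⟨f, F0, hF0, hf⟩
    · rintro x ⟨G1, hG1, hx⟩ y ⟨G2, hG2, hy⟩
      rcases hchain.total hG1 hG2 with h | h
      · exact ⟨G2, hG2, (hc hG2).1.2.2.1 x (h hx) y hy⟩
      · exact ⟨G1, hG1, (hc hG1).1.2.2.1 x hx y (h hy)⟩
    · rintro x ⟨G, hG, hx⟩ y hyS hxy
      exact ⟨G, hG, (hc hG).1.2.2.2 x hx y hyS hxy⟩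
    · rintro ⟨G, hG, hbG⟩
      exact (hc hG).2 hbG
  obtain ⟨M, hFM, hM⟩ := zorn_subset_nonempty _ hchainub F ⟨hF, hbot⟩
  refine ⟨M, ⟨hM.1.1, ?_, ?_⟩, hFM⟩
  · intro hMS
    exact hM.1.2 (hMS ▸ hBotS)
  · intro G hG hGS hMG
    have hGbot : ⊥ ∉ G := fun hb => hGS (eq_of_bot_mem_on A hG hb)
    exact Set.Subset.antisymm hMG (hM.2 ⟨hG, hGbot⟩ hMG)

lemma exists_bot_of_not_mem_on {S M : Set α}
    (hS : ∀ x ∈ S, ∀ y ∈ S, A.mul x y ∈ S) (hTop : ⊤ ∈ S) (hBotS : ⊥ ∈ S)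
    (hM : A.IsMaximalFilterOn S M) {x : α} (hxS : x ∈ S) (hx : x ∉ M) :
    ∃ f ∈ M, ∃ n, A.mul f (A.pow x n) ≤ ⊥ := by
  have hpowS : ∀ n, A.pow x n ∈ S := by
    intro n
    induction n with
    | zero => exact hTop
    | succ n ih => exact hS _ ih _ hxS
  set G : Set α := {y | y ∈ S ∧ ∃ f ∈ M, ∃ n, A.mul f (A.pow x n) ≤ y} with hGdef
  have hMG : M ⊆ G := fun m hm =>
    ⟨hM.1.1 hm, m, hm, 0, le_of_eq (A.mul_top m)⟩
  have hGfil : A.IsFilterOn S G := by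
    refine ⟨fun y hy => hy.1, ⟨⊤, hMG (top_mem_on A hM.1 hTop)⟩, ?_, ?_⟩
    · rintro y ⟨hyS, f, hf, n, hfn⟩ z ⟨hzS, g, hg, m, hgm⟩
      refine ⟨hS _ hyS _ hzS, A.mul f g, hM.1.2.2.1 f hf g hg, n + m, ?_⟩
      rw [pow_add A, mul_mul_mul_comm A]
      exact mul_mono A hfn hgm
    · rintro y ⟨hyS, f, hf, n, hfn⟩ z hzS hyz
      exact ⟨hzS, f, hf, n, le_trans hfn hyz⟩
  have hxG : x ∈ G := by
    refine ⟨hxS, ⊤, top_mem_on A hM.1 hTop, 1, ?_⟩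
    show A.mul ⊤ (A.mul (A.pow x 0) x) ≤ x
    show A.mul ⊤ (A.mul ⊤ x) ≤ x
    exact le_trans (mul_le_right A _ _) (mul_le_right A ⊤ x)
  have hGS : G = S := by
    by_contra hne
    exact hx ((hM.2.2 G hGfil hne hMG) ▸ hxG)
  have hbG : ⊥ ∈ G := hGS ▸ hBotS
  exact hbG.2

end Filters

section Sigma

variable {α : Type*} [Lattice α] [BoundedOrder α] (A : BLAlgebra α) {σ : α → α}

lemma sigma_top (hσ : A.IsStateMorphismOperator σ) : σ ⊤ = ⊤ := by
  have h := hσ.2.1 ⊥ ⊥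
  rw [imp_self A, inf_idem, hσ.1, imp_self A] at h
  exact h

lemma sigma_idem (hσ : A.IsStateMorphismOperator σ) (x : α) : σ (σ x) = σ x := by
  have h := hσ.2.2.1 x ⊤
  rw [sigma_top A hσ, A.mul_top] at h
  exact h

lemma sigma_mono (hσ : A.IsStateMorphismOperator σ) {a b : α} (h : a ≤ b) : σ a ≤ σ b := by
  have h2 : b ⊓ a = a := inf_eq_right.mpr h
  have h3 : σ (b ⊓ a) ≤ σ b := by
    rw [A.inf_eq_mul_imp, hσ.2.2.2.2]
    exact mul_le_left A _ _
  rw [h2] at h3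
  exact h3

lemma sigma_pow (hσ : A.IsStateMorphismOperator σ) (x : α) :
    ∀ n, σ (A.pow x n) = A.pow (σ x) n := by
  intro n
  induction n with
  | zero => exact sigma_top A hσ
  | succ n ih =>
      show σ (A.mul (A.pow x n) x) = A.mul (A.pow (σ x) n) (σ x)
      rw [hσ.2.2.2.2, ih]

lemma sigma_neg (hσ : A.IsStateMorphismOperator σ) (y : α) :
    σ (A.imp y ⊥) = A.imp (σ y) ⊥ := by
  have h := hσ.2.1 y ⊥
  rw [inf_bot_eq, hσ.1] at h
  exact h

end Sigma

end BLAux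

/-- a state-morphism BL-algebra (A, σ) is semisimple (Rad(σ(A)) = {⊤}) iff
Rad(A) ⊆ Ker(σ). -/
theorem semisimple_iff_rad_subset_ker {α : Type*} [Lattice α] [BoundedOrder α]
    (A : BLAlgebra α) (σ : α → α) (hσ : A.IsStateMorphismOperator σ) :
    A.RadOn (Set.range σ) = {⊤} ↔ A.Rad ⊆ A.Ker σ := by
  classical
  have hTopS : ⊤ ∈ Set.range σ := ⟨⊤, BLAux.sigma_top A hσ⟩
  have hBotS : ⊥ ∈ Set.range σ := ⟨⊥, hσ.1⟩
  have hSmul : ∀ x ∈ Set.range σ, ∀ y ∈ Set.range σ, A.mul x y ∈ Set.range σ := by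
    rintro x ⟨u, rfl⟩ y ⟨v, rfl⟩
    exact ⟨A.mul u v, hσ.2.2.2.2 u v⟩
  have hfix : ∀ x ∈ Set.range σ, σ x = x := by
    rintro x ⟨u, rfl⟩
    exact BLAux.sigma_idem A hσ u
  have hunivfil : ∀ {F : Set α}, A.IsFilter F ↔ A.IsFilterOn Set.univ F := by
    intro F
    constructor
    · rintro ⟨h1, h2, h3⟩
      exact ⟨Set.subset_univ F, h1, h2, fun x hx y _ => h3 x hx y⟩
    · rintro ⟨_, h1, h2, h3⟩
      exact ⟨h1, h2, fun x hx y => h3 x hx y (Set.mem_univ y)⟩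
  have hunivmax : ∀ {F : Set α}, A.IsMaximalFilter F ↔ A.IsMaximalFilterOn Set.univ F := by
    intro F
    constructor
    · rintro ⟨h1, h2, h3⟩
      exact ⟨hunivfil.mp h1, h2, fun G hG => h3 G (hunivfil.mpr hG)⟩
    · rintro ⟨h1, h2, h3⟩
      exact ⟨hunivfil.mpr h1, h2, fun G hG => h3 G (hunivfil.mp hG)⟩
  constructor
  · -- semisimple → Rad ⊆ Ker
    intro hss x hx
    have hmem : σ x ∈ A.RadOn (Set.range σ) := by
      refine ⟨⟨x, rfl⟩, ?_⟩
      intro F hF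
      by_contra hnot
      obtain ⟨f, hfF, n, hfn⟩ :=
        BLAux.exists_bot_of_not_mem_on A hSmul hTopS hBotS hF ⟨x, rfl⟩ hnot
      have hfle : f ≤ A.imp (A.pow (σ x) n) ⊥ :=
        (A.le_imp_iff _ _ _).mpr (by rw [A.mul_comm]; exact hfn)
      have hneg : σ (A.imp (A.pow x n) ⊥) = A.imp (A.pow (σ x) n) ⊥ := by
        rw [BLAux.sigma_neg A hσ, BLAux.sigma_pow A hσ]
      have hnS : A.imp (A.pow (σ x) n) ⊥ ∈ Set.range σ := ⟨_, hneg⟩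
      have hmemF : σ (A.imp (A.pow x n) ⊥) ∈ F := by
        rw [hneg]
        exact hF.1.2.2.2 f hfF _ hnS hfle
      have hGfil : A.IsFilter (σ ⁻¹' F) := by
        refine ⟨⟨⊤, ?_⟩, ?_, ?_⟩
        · show σ ⊤ ∈ F
          rw [BLAux.sigma_top A hσ]
          exact BLAux.top_mem_on A hF.1 hTopS
        · intro a ha b hb
          show σ (A.mul a b) ∈ F
          rw [hσ.2.2.2.2]
          exact hF.1.2.2.1 _ ha _ hb
        · intro a ha b hab
          exact hF.1.2.2.2 _ ha _ ⟨b, rfl⟩ (BLAux.sigma_mono A hσ hab)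
      have hGbot : ⊥ ∉ σ ⁻¹' F := by
        intro hb
        have hb' : σ ⊥ ∈ F := hb
        rw [hσ.1] at hb'
        exact hF.2.1 (BLAux.eq_of_bot_mem_on A hF.1 hb')
      obtain ⟨M, hM, hGM⟩ :=
        BLAux.exists_maximal_on A (Set.mem_univ ⊥) (hunivfil.mp hGfil) hGbot
      have hxM : x ∈ M := hx M (hunivmax.mpr hM)
      have hnM : A.imp (A.pow x n) ⊥ ∈ M := hGM hmemF
      have hpM : A.pow x n ∈ M := BLAux.pow_mem_on A hM.1 (Set.mem_univ ⊤) hxM n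
      have hbotM : ⊥ ∈ M := by
        have h := hM.1.2.2.1 _ hpM _ hnM
        rwa [BLAux.mul_neg_self A] at h
      exact hM.2.1 (BLAux.eq_of_bot_mem_on A hM.1 hbotM)
    have h := hmem
    rw [hss] at h
    exact h
  · -- Rad ⊆ Ker → semisimple
    intro hk
    apply Set.Subset.antisymm
    · intro x hx
      obtain ⟨hxS, hall⟩ := hx
      have hpowS : ∀ k, A.pow x k ∈ Set.range σ := by
        intro k
        induction k with
        | zero => exact hTopS
        | succ k ih => exact hSmul _ ih _ hxS
      have hxRad : x ∈ A.Rad := by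
        intro M hMmax
        have hM := hunivmax.mp hMmax
        by_contra hxM
        obtain ⟨m, hmM, n, hmn⟩ :=
          BLAux.exists_bot_of_not_mem_on A (fun a _ b _ => Set.mem_univ _)
            (Set.mem_univ ⊤) (Set.mem_univ ⊥) hM (Set.mem_univ x) hxM
        have hcS : A.imp (A.pow x n) ⊥ ∈ Set.range σ := by
          obtain ⟨u, hu⟩ := hpowS n
          refine ⟨A.imp (σ u) (σ ⊥), ?_⟩
          rw [hσ.2.2.2.1, hu, hσ.1]
        have hcM : A.imp (A.pow x n) ⊥ ∈ M :=
          hM.1.2.2.2 m hmM _ (Set.mem_univ _)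
            ((A.le_imp_iff _ _ _).mpr (by rw [A.mul_comm]; exact hmn))
        have hF0 : A.IsFilterOn (Set.range σ) (M ∩ Set.range σ) := by
          refine ⟨Set.inter_subset_right, ⟨⊤, ?_, hTopS⟩, ?_, ?_⟩
          · exact BLAux.top_mem_on A hM.1 (Set.mem_univ ⊤)
          · rintro a ⟨haM, haS⟩ b ⟨hbM, hbS⟩
            exact ⟨hM.1.2.2.1 a haM b hbM, hSmul a haS b hbS⟩
          · rintro a ⟨haM, haS⟩ b hbS hab
            exact ⟨hM.1.2.2.2 a haM b (Set.mem_univ b) hab, hbS⟩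
        have hF0bot : ⊥ ∉ M ∩ Set.range σ := by
          rintro ⟨hbM, -⟩
          exact hMmax.2.1 (BLAux.eq_of_bot_mem_on A hM.1 hbM)
        obtain ⟨Fb, hFb, hF0Fb⟩ := BLAux.exists_maximal_on A hBotS hF0 hF0bot
        have hxFb : x ∈ Fb := hall Fb hFb
        have hpFb : A.pow x n ∈ Fb := BLAux.pow_mem_on A hFb.1 hTopS hxFb n
        have hcFb : A.imp (A.pow x n) ⊥ ∈ Fb := hF0Fb ⟨hcM, hcS⟩
        have hbFb : ⊥ ∈ Fb := by
          have h := hFb.1.2.2.1 _ hpFb _ hcFb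
          rwa [BLAux.mul_neg_self A] at h
        exact hFb.2.1 (BLAux.eq_of_bot_mem_on A hFb.1 hbFb)
      have hker : σ x = ⊤ := hk hxRad
      have hfx : σ x = x := hfix x hxS
      show x ∈ ({⊤} : Set α)
      rw [Set.mem_singleton_iff, ← hfx]
      exact hker
    · intro y hy
      have hy' : y = ⊤ := hy
      subst hy'
      exact ⟨hTopS, fun F hF => BLAux.top_mem_on A hF.1 hTopS⟩
end
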